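/- If Γ is a torsion-free discrete group of isometries acting freely on the Heisenberg group H_n such that a minimal connected Γ-invariant Lie subgroup V on which Γ acts is cocompact, and Γ is either abelian or 2-step nilpotent, then Γ acts on V by left translations. -/

import Mathlib

/-! Setup: the Heisenberg group `H_n = ℂ^{n-1} × ℝ` (here `m = n-1`), its unitary
rotations `U(n-1)`, the isometry group `H(n) = H_n ⋊ U(n-1)` of the Cygan metric, its
natural affine action on `H_n`, and the natural topologies. -/

/-- The Heisenberg group `H_n = ℂ^{n-1} × ℝ` as a type (here `m = n-1`). -/
structure Heis (m : ℕ) where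
  ξ : EuclideanSpace ℂ (Fin m)
  v : ℝ

/-- The Heisenberg group law `(ξ₁,v₁)·(ξ₂,v₂) = (ξ₁+ξ₂, v₁+v₂+2 Im⟨ξ₁,ξ₂⟩)`, with
`⟨ξ₁,ξ₂⟩ = Σ ξ₁ᵢ conj(ξ₂ᵢ) = inner ξ₂ ξ₁` in Mathlib's convention. -/
noncomputable instance instGroupHeis (m : ℕ) : Group (Heis m) where
  mul p q := ⟨p.ξ + q.ξ, p.v + q.v + 2 * (inner ℂ q.ξ p.ξ : ℂ).im⟩
  one := ⟨0, 0⟩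
  inv p := ⟨-p.ξ, -p.v⟩
  mul_assoc := by
    rintro ⟨a, x⟩ ⟨b, y⟩ ⟨c, z⟩
    show Heis.mk ((a + b) + c)
        ((x + y + 2 * (inner ℂ b a : ℂ).im) + z + 2 * (inner ℂ c (a + b) : ℂ).im) =
      Heis.mk (a + (b + c))
        (x + (y + z + 2 * (inner ℂ c b : ℂ).im) + 2 * (inner ℂ (b + c) a : ℂ).im)
    simp only [Heis.mk.injEq, inner_add_left, inner_add_right, Complex.add_im]
    exact ⟨add_assoc a b c, by ring⟩
  one_mul := by
    rintro ⟨a, x⟩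
    show Heis.mk (0 + a) (0 + x + 2 * (inner ℂ a (0 : EuclideanSpace ℂ (Fin m)) : ℂ).im) =
      Heis.mk a x
    simp
  mul_one := by
    rintro ⟨a, x⟩
    show Heis.mk (a + 0) (x + 0 + 2 * (inner ℂ (0 : EuclideanSpace ℂ (Fin m)) a : ℂ).im) =
      Heis.mk a x
    simp
  inv_mul_cancel := by
    rintro ⟨a, x⟩
    show Heis.mk (-a + a) (-x + x + 2 * (inner ℂ a (-a) : ℂ).im) = Heis.mk 0 0
    simp [inner_neg_right, inner_self_im]
    rw [← Complex.ofReal_pow]; exact Complex.ofReal_im _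

noncomputable instance (m : ℕ) : TopologicalSpace (Heis m) :=
  TopologicalSpace.induced (fun p => (p.ξ, p.v)) inferInstance

/-- The unitary group `U(n-1)`, as ℂ-linear isometries of `ℂ^{n-1}`. -/
abbrev UnitaryGp (m : ℕ) :=
  EuclideanSpace ℂ (Fin m) ≃ₗᵢ[ℂ] EuclideanSpace ℂ (Fin m)

/-- A unitary rotation `A` acts on `H_n` by the automorphism `(ξ,v) ↦ (Aξ, v)`. -/
noncomputable def rotAut (m : ℕ) (A : UnitaryGp m) : MulAut (Heis m) where
  toFun p := ⟨A p.ξ, p.v⟩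
  invFun p := ⟨A.symm p.ξ, p.v⟩
  left_inv := by intro p; simp
  right_inv := by intro p; simp
  map_mul' := by
    rintro ⟨a, x⟩ ⟨b, y⟩
    show Heis.mk (A (a + b)) (x + y + 2 * (inner ℂ b a : ℂ).im) =
      Heis.mk (A a + A b) (x + y + 2 * (inner ℂ (A b) (A a) : ℂ).im)
    simp [LinearIsometryEquiv.inner_map_map]

/-- The rotation action as a homomorphism `U(n-1) →* Aut(H_n)`. -/
noncomputable def rotHom (m : ℕ) : UnitaryGp m →* MulAut (Heis m) where
  toFun := rotAut m
  map_one' := by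
    ext p
    show Heis.mk ((1 : UnitaryGp m) p.ξ) p.v = p
    cases p; rfl
  map_mul' := by
    intro A B
    ext p
    rfl

/-- The isometry group `H(n) = H_n ⋊ U(n-1)` of the Heisenberg group. -/
abbrev HeisIsomGp (m : ℕ) := Heis m ⋊[rotHom m] UnitaryGp m

noncomputable instance (m : ℕ) : TopologicalSpace (HeisIsomGp m) :=
  TopologicalSpace.induced
    (fun g => (g.left.ξ, g.left.v, fun x : EuclideanSpace ℂ (Fin m) => g.right x))
    inferInstance

/-- The natural affine action of `H_n ⋊ U(n-1)` on `H_n`: `(b,A)·x = b·(A·x)`. -/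
noncomputable def affAct {m : ℕ} (g : HeisIsomGp m) (x : Heis m) : Heis m :=
  g.left * rotHom m g.right x

open scoped commutatorElement

/-! Write `γ = (b, A)` and let `β γ = b.ξ` be the horizontal part of its translation: `β` is a
cocycle for the rotation parts `A`, and cocompactness says that the horizontal projection `P` of
`V`, an additive monoid, lies within bounded distance of `β Γ`. Since `n • w ∈ P` for `w ∈ P`, a
rotation whose displacement on `β Γ` is bounded modulo a closed subspace `S` has its displacement
on all of `P` inside `S`.

For commuting `c, k` the cocycle identity gives `A c (β k) - β k = A k (β c) - β c`, which is
bounded in `k`; this settles the abelian case with `S = 0`. If `Γ` is 2-step nilpotent, the same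
argument shows that commutators rotate `P` trivially, hence their translation parts are fixed by
all of `A Γ`; the displacement of any `A g` on `β Γ` is then bounded modulo the fixed subspace,
so `u = A g w - w` is fixed and `A (g ^ n) w = w + n • u` stays bounded only if `u = 0`. Thus all
rotations fix `P`, and `γ` acts on `V` as left translation by `b`. -/

theorem eq_zero_of_forall_natCast_mul_le {α : Type*} [Field α] [LinearOrder α]
    [IsStrictOrderedRing α] [Archimedean α] {a C : α} (ha : 0 ≤ a)
    (h : ∀ n : ℕ, n * a ≤ C) : a = 0 := by
  by_contra ha0
  have ha' : 0 < a := ha.lt_of_ne (Ne.symm ha0)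
  obtain ⟨n, hn⟩ := exists_nat_gt (C / a)
  exact absurd (h n) (not_le.mpr ((div_lt_iff₀ ha').mp hn))

theorem Submodule.mem_of_forall_exists_norm_nsmul_sub_le {𝕜 E : Type*} [RCLike 𝕜]
    [SeminormedAddCommGroup E] [NormedSpace 𝕜 E] {S : Submodule 𝕜 E} (hS : IsClosed (S : Set E))
    {u : E} {C : ℝ} (h : ∀ n : ℕ, ∃ z ∈ S, ‖n • u - z‖ ≤ C) : u ∈ S := by
  have hnorm : ‖S.mkQ u‖ = 0 := by
    refine eq_zero_of_forall_natCast_mul_le (C := C) (norm_nonneg _) fun n => ?_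
    obtain ⟨z, hz, hnz⟩ := h n
    calc (n : ℝ) * ‖S.mkQ u‖ = ‖S.mkQ (n • u - z)‖ := by
          rw [map_sub, S.mkQ_apply z, (Submodule.Quotient.mk_eq_zero S).2 hz, sub_zero,
            ← Nat.cast_smul_eq_nsmul 𝕜, map_smul, norm_smul, RCLike.norm_natCast]
      _ ≤ ‖n • u - z‖ := Submodule.Quotient.norm_mk_le S _
      _ ≤ C := hnz
  rw [← SetLike.mem_coe, ← hS.closure_eq]
  exact QuotientAddGroup.norm_mk_eq_zero_iff_mem_closure.mp hnorm

namespace LinearIsometryEquiv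

variable {𝕜 E : Type*}

theorem norm_apply_sub_self_le [Semiring 𝕜] [SeminormedAddCommGroup E] [Module 𝕜 E]
    (T : E ≃ₗᵢ[𝕜] E) (x : E) : ‖T x - x‖ ≤ 2 * ‖x‖ := by
  linarith [norm_sub_le (T x) x, T.norm_map x]

theorem pow_apply_eq_add_nsmul [Semiring 𝕜] [SeminormedAddCommGroup E] [Module 𝕜 E]
    (T : E ≃ₗᵢ[𝕜] E) {w : E} (hfix : T (T w - w) = T w - w) (n : ℕ) :
    (T ^ n) w = w + n • (T w - w) := by
  induction n with
  | zero => simp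
  | succ n ih =>
    rw [pow_succ', coe_mul, Function.comp_apply, ih, map_add, map_nsmul, hfix, succ_nsmul]
    abel

theorem apply_eq_self_of_apply_sub_self_fixed [RCLike 𝕜] [NormedAddCommGroup E]
    [NormedSpace 𝕜 E] (T : E ≃ₗᵢ[𝕜] E) {w : E} (hfix : T (T w - w) = T w - w) : T w = w := by
  refine sub_eq_zero.mp (norm_eq_zero.mp (eq_zero_of_forall_natCast_mul_le (C := 2 * ‖w‖)
    (norm_nonneg _) fun n => ?_))
  calc (n : ℝ) * ‖T w - w‖ = ‖(T ^ n) w - w‖ := by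
        rw [T.pow_apply_eq_add_nsmul hfix, add_sub_cancel_left, RCLike.norm_nsmul 𝕜, nsmul_eq_mul]
    _ ≤ 2 * ‖w‖ := (T ^ n).norm_apply_sub_self_le w

theorem apply_sub_self_mem_of_forall_exists_norm_sub_le [RCLike 𝕜] [NormedAddCommGroup E]
    [NormedSpace 𝕜 E] {ι : Type*} (T : E ≃ₗᵢ[𝕜] E) {S : Submodule 𝕜 E}
    (hS : IsClosed (S : Set E)) {β : ι → E} {M : ℝ}
    (hT : ∀ i, ∃ z ∈ S, ‖T (β i) - β i - z‖ ≤ M) {P : AddSubmonoid E} {R : ℝ}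
    (hP : ∀ w ∈ P, ∃ i, ‖w - β i‖ ≤ R) {w : E} (hw : w ∈ P) : T w - w ∈ S := by
  refine S.mem_of_forall_exists_norm_nsmul_sub_le hS (C := 2 * R + M) fun n => ?_
  obtain ⟨i, hi⟩ := hP (n • w) (P.nsmul_mem hw n)
  obtain ⟨z, hz, hzi⟩ := hT i
  refine ⟨z, hz, ?_⟩
  have hsplit : n • (T w - w) - z = (T (n • w - β i) - (n • w - β i)) + (T (β i) - β i - z) := by
    rw [map_sub, map_nsmul, nsmul_sub]
    abel
  calc ‖n • (T w - w) - z‖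
      ≤ ‖T (n • w - β i) - (n • w - β i)‖ + ‖T (β i) - β i - z‖ := hsplit ▸ norm_add_le _ _
    _ ≤ 2 * R + M := by linarith [T.norm_apply_sub_self_le (n • w - β i)]

theorem apply_eq_self_of_forall_norm_sub_le [RCLike 𝕜] [NormedAddCommGroup E]
    [NormedSpace 𝕜 E] {ι : Type*} (T : E ≃ₗᵢ[𝕜] E) {β : ι → E} {M : ℝ}
    (hT : ∀ i, ‖T (β i) - β i‖ ≤ M) {P : AddSubmonoid E} {R : ℝ}
    (hP : ∀ w ∈ P, ∃ i, ‖w - β i‖ ≤ R) {w : E} (hw : w ∈ P) : T w = w := by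
  have hbot : IsClosed ((⊥ : Submodule 𝕜 E) : Set E) := by
    rw [Submodule.bot_coe]
    exact isClosed_singleton
  refine sub_eq_zero.mp ((Submodule.mem_bot 𝕜).mp
    (T.apply_sub_self_mem_of_forall_exists_norm_sub_le hbot (M := M) (fun i => ?_) hP hw))
  exact ⟨0, Submodule.zero_mem _, by rw [sub_zero]; exact hT i⟩

end LinearIsometryEquiv

section AffineCocycle

variable {𝕜 E G : Type*} [RCLike 𝕜] [NormedAddCommGroup E] [NormedSpace 𝕜 E] [Group G]

/-- `β` is the translation part of the affine isometric action `g • x = A g x + β g`. -/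
def IsAffineCocycle (A : G →* (E ≃ₗᵢ[𝕜] E)) (β : G → E) : Prop :=
  ∀ g h, β (g * h) = β g + A g (β h)

def fixedSubmodule (A : G →* (E ≃ₗᵢ[𝕜] E)) : Submodule 𝕜 E where
  carrier := {x | ∀ k, A k x = x}
  add_mem' hx hy k := by rw [map_add, hx k, hy k]
  zero_mem' k := map_zero (A k)
  smul_mem' c x hx k := by rw [map_smul, hx k]

theorem isClosed_fixedSubmodule (A : G →* (E ≃ₗᵢ[𝕜] E)) :
    IsClosed (fixedSubmodule A : Set E) := by
  have hcoe : (fixedSubmodule A : Set E) = ⋂ k, {x | A k x = x} := by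
    ext x
    simp only [Set.mem_iInter]
    rfl
  rw [hcoe]
  exact isClosed_iInter fun k => isClosed_eq (A k).continuous continuous_id

namespace IsAffineCocycle

variable {A : G →* (E ≃ₗᵢ[𝕜] E)} {β : G → E}

theorem apply_sub_self_eq_of_commute (hβ : IsAffineCocycle A β) {c k : G} (hck : Commute c k) :
    A c (β k) - β k = A k (β c) - β c := by
  have h := hβ c k
  rw [hck.eq, hβ k c] at h
  linear_combination (norm := abel) -h

theorem apply_eq_self_of_forall_commute (hβ : IsAffineCocycle A β) {P : AddSubmonoid E} {R : ℝ}
    (hP : ∀ w ∈ P, ∃ g, ‖w - β g‖ ≤ R) {c : G} (hc : ∀ k, Commute c k) {w : E} (hw : w ∈ P) :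
    A c w = w := by
  refine (A c).apply_eq_self_of_forall_norm_sub_le (M := 2 * ‖β c‖) (fun k => ?_) hP hw
  rw [hβ.apply_sub_self_eq_of_commute (hc k)]
  exact (A k).norm_apply_sub_self_le (β c)

theorem apply_sub_self_sub_commutator (hβ : IsAffineCocycle A β) {g h : G}
    (hfix : A ⁅g, h⁆ (β h) = β h) :
    A g (β h) - β h - β ⁅g, h⁆ = A (⁅g, h⁆ * h) (β g) - β g := by
  have hgh : β (g * h) = β ⁅g, h⁆ + (β h + A (⁅g, h⁆ * h) (β g)) := by
    rw [show g * h = ⁅g, h⁆ * (h * g) by group, hβ, hβ, map_add, hfix, map_mul, LinearIsometryEquiv.coe_mul,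
      Function.comp_apply]
  rw [hβ] at hgh
  linear_combination (norm := abel) hgh

theorem apply_eq_self_of_commutator_central (hβ : IsAffineCocycle A β) {P : AddSubmonoid E}
    {R : ℝ} (hβP : ∀ g, β g ∈ P) (hP : ∀ w ∈ P, ∃ g, ‖w - β g‖ ≤ R)
    (hcent : ∀ a b c : G, ⁅⁅a, b⁆, c⁆ = 1) (g : G) {w : E} (hw : w ∈ P) : A g w = w := by
  have hcomm (a b k : G) : Commute ⁅a, b⁆ k :=
    commutatorElement_eq_one_iff_mul_comm.mp (hcent a b k)
  have hfixP (a b : G) {w : E} (hw : w ∈ P) : A ⁅a, b⁆ w = w :=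
    hβ.apply_eq_self_of_forall_commute hP (hcomm a b) hw
  have hfixed (a b : G) : β ⁅a, b⁆ ∈ fixedSubmodule A := fun k => by
    have h := hβ.apply_sub_self_eq_of_commute (hcomm a b k)
    rwa [hfixP a b (hβP k), sub_self, eq_comm, sub_eq_zero] at h
  have hmem : A g w - w ∈ fixedSubmodule A := by
    refine (A g).apply_sub_self_mem_of_forall_exists_norm_sub_le (isClosed_fixedSubmodule A)
      (M := 2 * ‖β g‖) (fun h => ⟨β ⁅g, h⁆, hfixed g h, ?_⟩) hP hw
    rw [hβ.apply_sub_self_sub_commutator (hfixP g h (hβP h))]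
    exact (A _).norm_apply_sub_self_le (β g)
  exact (A g).apply_eq_self_of_apply_sub_self_fixed (hmem g)

end IsAffineCocycle

end AffineCocycle

namespace Heis

variable {m : ℕ}

theorem one_ξ : (1 : Heis m).ξ = 0 :=
  rfl

theorem continuous_ξ : Continuous (ξ : Heis m → EuclideanSpace ℂ (Fin m)) :=
  continuous_fst.comp (continuous_induced_dom (f := fun p : Heis m => (p.ξ, p.v)))

def horizontalProjection (V : Subgroup (Heis m)) : AddSubmonoid (EuclideanSpace ℂ (Fin m)) where
  carrier := {w | ∃ x ∈ V, x.ξ = w}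
  add_mem' := by
    rintro _ _ ⟨x, hx, rfl⟩ ⟨y, hy, rfl⟩
    exact ⟨x * y, V.mul_mem hx hy, rfl⟩
  zero_mem' := ⟨1, V.one_mem, rfl⟩

end Heis

section AffineAction

variable {m : ℕ}

theorem affAct_ξ (g : HeisIsomGp m) (x : Heis m) : (affAct g x).ξ = g.left.ξ + g.right x.ξ :=
  rfl

theorem affAct_eq_left_mul {g : HeisIsomGp m} {x : Heis m} (hx : g.right x.ξ = x.ξ) :
    affAct g x = g.left * x := by
  show g.left * Heis.mk (g.right x.ξ) x.v = g.left * x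
  rw [hx]

theorem exists_norm_sub_left_le_of_subset_iUnion {Γ : Subgroup (HeisIsomGp m)}
    {K S : Set (Heis m)} (hK : IsCompact K) (hS : S ⊆ ⋃ γ ∈ Γ, affAct γ '' K) :
    ∃ R, ∀ x ∈ S, ∃ γ ∈ Γ, ‖x.ξ - γ.left.ξ‖ ≤ R := by
  obtain ⟨R, hR⟩ := (hK.image Heis.continuous_ξ.norm).bddAbove
  refine ⟨R, fun x hx => ?_⟩
  obtain ⟨γ, hγ, k, hk, rfl⟩ : ∃ γ ∈ Γ, ∃ k ∈ K, affAct γ k = x := by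
    simpa only [Set.mem_iUnion, Set.mem_image, exists_prop] using hS hx
  refine ⟨γ, hγ, ?_⟩
  rw [affAct_ξ, add_sub_cancel_left, γ.right.norm_map]
  exact hR ⟨k, hk, rfl⟩

end AffineAction

theorem gamma_acts_by_left_translations_general (n : ℕ)
    (Γ : Subgroup (HeisIsomGp (n-1)))
    (V : Subgroup (Heis (n-1)))
    (hVinv : ∀ γ ∈ Γ, ∀ x ∈ V, affAct γ x ∈ V)
    (hcocompact : ∃ K : Set (Heis (n-1)), IsCompact K ∧ K ⊆ (V : Set (Heis (n-1))) ∧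
      (V : Set (Heis (n-1))) ⊆ ⋃ γ ∈ Γ, affAct γ '' K)
    (hnilp : (∀ a ∈ Γ, ∀ b ∈ Γ, a * b = b * a) ∨
      (∀ a ∈ Γ, ∀ b ∈ Γ, ∀ c ∈ Γ, ⁅⁅a, b⁆, c⁆ = 1)) :
    ∀ γ ∈ Γ, ∃ b : Heis (n-1), ∀ x ∈ V, affAct γ x = b * x := by
  obtain ⟨K, hK, -, hcover⟩ := hcocompact
  obtain ⟨R, hR⟩ := exists_norm_sub_left_le_of_subset_iUnion hK hcover
  let A : Γ →* UnitaryGp (n-1) := SemidirectProduct.rightHom.comp Γ.subtype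
  let β (g : Γ) : EuclideanSpace ℂ (Fin (n-1)) := (g : HeisIsomGp (n-1)).left.ξ
  have hβ : IsAffineCocycle A β := fun g h => rfl
  have hβP (g : Γ) : β g ∈ Heis.horizontalProjection V :=
    ⟨affAct g 1, hVinv g g.2 1 V.one_mem, by rw [affAct_ξ, Heis.one_ξ, map_zero, add_zero]⟩
  have hP : ∀ w ∈ Heis.horizontalProjection V, ∃ g, ‖w - β g‖ ≤ R := by
    rintro _ ⟨x, hx, rfl⟩
    obtain ⟨γ, hγ, hxγ⟩ := hR x hx
    exact ⟨⟨γ, hγ⟩, hxγ⟩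
  have hfix (g : Γ) {w} (hw : w ∈ Heis.horizontalProjection V) : A g w = w := by
    rcases hnilp with habel | hcent
    · exact hβ.apply_eq_self_of_forall_commute hP (fun k => Subtype.ext (habel g g.2 k k.2)) hw
    · exact hβ.apply_eq_self_of_commutator_central hβP hP
        (fun a b c => Subtype.ext (hcent a a.2 b b.2 c c.2)) g hw
  intro γ hγ
  exact ⟨γ.left, fun x hx => affAct_eq_left_mul (hfix ⟨γ, hγ⟩ ⟨x, hx, rfl⟩)⟩

/-- let `Γ` be a torsion-free discrete subgroup of
`H(n) = H_n ⋊ U(n-1)` acting freely on the Heisenberg group `H_n`, let `V` be a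
minimal connected (closed) `Γ`-invariant Lie subgroup of `H_n` on which `Γ` acts
cocompactly, and suppose `Γ` is abelian or 2-step nilpotent. Then `Γ` acts on `V`
by left translations. -/
theorem gamma_acts_by_left_translations (n : ℕ) (hn : 2 ≤ n)
    (Γ : Subgroup (HeisIsomGp (n-1)))
    (hdiscrete : DiscreteTopology Γ)
    (htorsionfree : ∀ γ ∈ Γ, IsOfFinOrder γ → γ = 1)
    (hfree : ∀ γ ∈ Γ, ∀ x : Heis (n-1), affAct γ x = x → γ = 1)
    (V : Subgroup (Heis (n-1)))
    (hVconn : IsConnected (V : Set (Heis (n-1))))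
    (hVclosed : IsClosed (V : Set (Heis (n-1))))
    (hVinv : ∀ γ ∈ Γ, ∀ x ∈ V, affAct γ x ∈ V)
    (hVmin : ∀ W : Subgroup (Heis (n-1)), IsConnected (W : Set (Heis (n-1))) →
      IsClosed (W : Set (Heis (n-1))) → (∀ γ ∈ Γ, ∀ x ∈ W, affAct γ x ∈ W) →
      W ≤ V → W = V)
    (hcocompact : ∃ K : Set (Heis (n-1)), IsCompact K ∧ K ⊆ (V : Set (Heis (n-1))) ∧
      (V : Set (Heis (n-1))) ⊆ ⋃ γ ∈ Γ, affAct γ '' K)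
    (hnilp : (∀ a ∈ Γ, ∀ b ∈ Γ, a * b = b * a) ∨
      (∀ a ∈ Γ, ∀ b ∈ Γ, ∀ c ∈ Γ, ⁅⁅a, b⁆, c⁆ = 1)) :
    ∀ γ ∈ Γ, ∃ b : Heis (n-1), ∀ x ∈ V, affAct γ x = b * x :=
  gamma_acts_by_left_translations_general n Γ V hVinv hcocompact hnilp
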